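/- Let q > 1 be a real number and let 0 ≤ t < h ≤ n be integers. Then ∑_{k=0}^{h-t-1} (-1)^k (-q)^{-k(k-1)/2} / [ (1 - (-q)^{-(n-t-k)}) · ∏_{l=1}^{h-t-k-1}(1 - (-q)^{-l}) · ∏_{l=1}^{k}(1 - (-q)^{-l}) ] = (-1)^{h-t-1} (-q)^{-(h-t)(h-t-1)/2} (-q)^{-(n-h)(h-t-1)} / ∏_{l=n-h+1}^{n-t}(1 - (-q)^{-l}). -/

import Mathlib

/-!
With `x = (-q)⁻¹`, `X = x ^ (n - h)` and `m = h - t - 1`, the left-hand side is the partial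
fraction expansion in `X` of `(-1)^m x^(m+1 choose 2) X^m / ∏_{l=1}^{m+1} (1 - X x^l)`.
Both this function and its expansion `S_m(X)` satisfy
`(1 - x^(m+1)) S_{m+1}(X) = S_m(X x) - x^m S_m(X)`: for the expansion this is the `q`-Pascal
rule applied termwise, for the function a direct computation. Induction on `m` concludes.
-/

open Finset

theorem Nat.succ_choose_two (n : ℕ) : (n + 1).choose 2 = n.choose 2 + n := by
  rw [Nat.choose_succ_succ', Nat.choose_one_right, add_comm]

theorem Int.natCast_choose_two (n : ℕ) : ((n.choose 2 : ℕ) : ℤ) = n * (n - 1) / 2 := by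
  rw [Nat.choose_two_right, Int.natCast_ediv]
  rcases n with _ | n
  · simp
  · push_cast; simp

theorem zpow_neg_eq_inv_pow {G : Type*} [DivisionMonoid G] (y : G) {z : ℤ} {N : ℕ} (h : z = N) :
    y ^ (-z) = y⁻¹ ^ N := by
  rw [h, zpow_neg, zpow_natCast, inv_pow]

theorem one_sub_pow_succ_ne_zero_of_abs_lt_one {K : Type*} [Field K] [LinearOrder K]
    [IsStrictOrderedRing K] {x : K} (hx : |x| < 1) (j : ℕ) : 1 - x ^ (j + 1) ≠ 0 := by
  have : |x ^ (j + 1)| < 1 := by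
    rw [abs_pow]; exact pow_lt_one₀ (abs_nonneg x) hx (Nat.succ_ne_zero j)
  exact sub_ne_zero.mpr (abs_lt.mp this).2.ne'

section PartialFraction

variable {K : Type*} [Field K]

def qPochhammer (a x : K) (n : ℕ) : K := ∏ l ∈ range n, (1 - a * x ^ l)

theorem qPochhammer_zero (a x : K) : qPochhammer a x 0 = 1 := prod_range_zero _

theorem qPochhammer_succ (a x : K) (n : ℕ) :
    qPochhammer a x (n + 1) = qPochhammer a x n * (1 - a * x ^ n) :=
  prod_range_succ _ _

theorem qPochhammer_succ' (a x : K) (n : ℕ) :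
    qPochhammer a x (n + 1) = (1 - a) * qPochhammer (a * x) x n := by
  rw [qPochhammer, prod_range_succ', pow_zero, mul_one, mul_comm]
  exact congrArg _ (prod_congr rfl fun l _ => by ring)

theorem qPochhammer_self_succ (x : K) (n : ℕ) :
    qPochhammer x x (n + 1) = qPochhammer x x n * (1 - x ^ (n + 1)) := by
  rw [qPochhammer_succ, pow_succ']

theorem prod_Icc_one_sub_pow (x : K) (a n : ℕ) :
    ∏ l ∈ Icc (a + 1) (a + n), (1 - x ^ l) = qPochhammer (x ^ (a + 1)) x n := by
  rw [← Ico_add_one_right_eq_Icc, prod_Ico_eq_prod_range, show a + n + 1 - (a + 1) = n by omega]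
  exact prod_congr rfl fun l _ => by rw [pow_add]

theorem qPochhammer_pow_succ_ne_zero {x : K} (hx : ∀ j, 1 - x ^ (j + 1) ≠ 0) (a n : ℕ) :
    qPochhammer (x ^ (a + 1)) x n ≠ 0 :=
  prod_ne_zero_iff.mpr fun l _ => by rw [← pow_add, Nat.add_right_comm]; exact hx (a + l)

theorem qPochhammer_self_ne_zero {x : K} (hx : ∀ j, 1 - x ^ (j + 1) ≠ 0) (n : ℕ) :
    qPochhammer x x n ≠ 0 := by
  simpa using qPochhammer_pow_succ_ne_zero hx 0 n

def partialFractionTarget (x X : K) (m : ℕ) : K :=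
  (-1) ^ m * x ^ (m + 1).choose 2 * X ^ m / qPochhammer (X * x) x (m + 1)

def partialFractionTerm (x X : K) (m k : ℕ) : K :=
  (-1) ^ k * x ^ k.choose 2 /
    ((1 - X * x ^ (m + 1 - k)) * qPochhammer x x (m - k) * qPochhammer x x k)

variable {x : K} (X : K)

theorem one_sub_pow_mul_partialFractionTarget_succ (m : ℕ)
    (hX : qPochhammer (X * x) x (m + 2) ≠ 0) :
    (1 - x ^ (m + 1)) * partialFractionTarget x X (m + 1)
      = partialFractionTarget x (X * x) m - x ^ m * partialFractionTarget x X m := by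
  have hXx : qPochhammer (X * x * x) x (m + 1)
      = qPochhammer (X * x * x) x m * (1 - X * x ^ (m + 2)) := by
    rw [qPochhammer_succ]; ring
  simp only [partialFractionTarget]
  rw [qPochhammer_succ' (X * x) x (m + 1), hXx] at hX
  rw [qPochhammer_succ' (X * x) x (m + 1), qPochhammer_succ' (X * x) x m, hXx,
    Nat.succ_choose_two (m + 1)]
  generalize qPochhammer (X * x * x) x m = P at *
  have := left_ne_zero_of_mul hX
  have := left_ne_zero_of_mul (right_ne_zero_of_mul hX)
  have := right_ne_zero_of_mul (right_ne_zero_of_mul hX)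
  field_simp
  ring

variable (hx : ∀ j, 1 - x ^ (j + 1) ≠ 0)
include hx

theorem partialFractionTerm_succ_zero (m : ℕ) :
    (1 - x ^ (m + 1)) * partialFractionTerm x X (m + 1) 0 = partialFractionTerm x (X * x) m 0 := by
  have := hx m
  have := qPochhammer_self_ne_zero hx m
  simp only [partialFractionTerm, Nat.sub_zero, qPochhammer_self_succ, qPochhammer_zero]
  rw [show X * x * x ^ (m + 1) = X * x ^ (m + 1 + 1) by ring]
  -- both sides share this factor, so where it vanishes both are `0` (as `a / 0 = 0`)
  by_cases hc : 1 - X * x ^ (m + 1 + 1) = 0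
  · simp [hc]
  · field_simp

theorem partialFractionTerm_succ_succ {m j : ℕ} (hj : j < m) :
    (1 - x ^ (m + 1)) * partialFractionTerm x X (m + 1) (j + 1)
        + x ^ m * partialFractionTerm x X m j = partialFractionTerm x (X * x) m (j + 1) := by
  obtain ⟨c, rfl⟩ : ∃ c, m = j + 1 + c := ⟨m - 1 - j, by omega⟩
  simp only [partialFractionTerm]
  rw [show j + 1 + c + 1 + 1 - (j + 1) = c + 2 by omega,
    show j + 1 + c + 1 - (j + 1) = c + 1 by omega,
    show j + 1 + c + 1 - j = c + 2 by omega,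
    show j + 1 + c - j = c + 1 by omega,
    show j + 1 + c - (j + 1) = c by omega,
    show X * x * x ^ (c + 1) = X * x ^ (c + 2) by ring,
    qPochhammer_self_succ x c, qPochhammer_self_succ x j, Nat.succ_choose_two]
  have := hx c
  have := hx j
  have := qPochhammer_self_ne_zero hx c
  have := qPochhammer_self_ne_zero hx j
  by_cases hc : 1 - X * x ^ (c + 2) = 0
  · simp [hc]
  · field_simp
    ring

theorem partialFractionTerm_succ_self (m : ℕ) :
    (1 - x ^ (m + 1)) * partialFractionTerm x X (m + 1) (m + 1)
        + x ^ m * partialFractionTerm x X m m = 0 := by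
  simp only [partialFractionTerm, Nat.sub_self, Nat.add_sub_cancel_left, qPochhammer_self_succ,
    qPochhammer_zero, Nat.succ_choose_two, pow_one]
  have := hx m
  have := qPochhammer_self_ne_zero hx m
  by_cases hc : 1 - X * x = 0
  · simp [hc]
  · field_simp
    ring

theorem one_sub_pow_mul_sum_partialFractionTerm_succ (m : ℕ) :
    (1 - x ^ (m + 1)) * ∑ k ∈ range (m + 2), partialFractionTerm x X (m + 1) k
      = ∑ k ∈ range (m + 1), partialFractionTerm x (X * x) m k
        - x ^ m * ∑ k ∈ range (m + 1), partialFractionTerm x X m k := by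
  have inner : ∑ k ∈ range (m + 1), ((1 - x ^ (m + 1)) * partialFractionTerm x X (m + 1) (k + 1)
      + x ^ m * partialFractionTerm x X m k)
        = ∑ k ∈ range m, partialFractionTerm x (X * x) m (k + 1) := by
    rw [sum_range_succ, partialFractionTerm_succ_self X hx, add_zero]
    exact sum_congr rfl fun j hj => partialFractionTerm_succ_succ X hx (mem_range.mp hj)
  rw [mul_sum, mul_sum, sum_range_succ', sum_range_succ' (partialFractionTerm x (X * x) m),
    ← inner, partialFractionTerm_succ_zero X hx, sum_add_distrib]
  ring

theorem sum_partialFractionTerm (m : ℕ) (hX : qPochhammer (X * x) x (m + 1) ≠ 0) :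
    ∑ k ∈ range (m + 1), partialFractionTerm x X m k = partialFractionTarget x X m := by
  induction m generalizing X with
  | zero => simp [partialFractionTerm, partialFractionTarget, qPochhammer]
  | succ m ih =>
    have hXx : qPochhammer (X * x * x) x (m + 1) ≠ 0 := by
      rw [qPochhammer_succ'] at hX; exact right_ne_zero_of_mul hX
    have hX' : qPochhammer (X * x) x (m + 1) ≠ 0 := by
      rw [qPochhammer_succ] at hX; exact left_ne_zero_of_mul hX
    rw [← mul_right_inj' (hx m), one_sub_pow_mul_sum_partialFractionTerm_succ X hx,
      ih (X * x) hXx, ih X hX', one_sub_pow_mul_partialFractionTarget_succ X m hX]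

end PartialFraction

/-- Lemma 5.30 of the paper. -/
theorem stmt_1 (q : ℝ) (hq : 1 < q) (n h t : ℕ) (ht : t < h) (hn : h ≤ n) :
    ∑ k ∈ Finset.range (h - t),
      (-1 : ℝ) ^ k * (-q) ^ (-((k : ℤ) * ((k : ℤ) - 1) / 2)) /
        ((1 - (-q) ^ (-((n : ℤ) - (t : ℤ) - (k : ℤ)))) *
          (∏ l ∈ Finset.Icc 1 (h - t - k - 1), (1 - (-q) ^ (-(l : ℤ)))) *
          (∏ l ∈ Finset.Icc 1 k, (1 - (-q) ^ (-(l : ℤ)))))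
    = (-1 : ℝ) ^ (h - t - 1) *
        (-q) ^ (-(((h : ℤ) - (t : ℤ)) * ((h : ℤ) - (t : ℤ) - 1) / 2)) *
        (-q) ^ (-(((n : ℤ) - (h : ℤ)) * ((h : ℤ) - (t : ℤ) - 1))) /
        ∏ l ∈ Finset.Icc (n - h + 1) (n - t), (1 - (-q) ^ (-(l : ℤ))) := by
  set x : ℝ := (-q)⁻¹
  have hx : ∀ j, 1 - x ^ (j + 1) ≠ 0 := one_sub_pow_succ_ne_zero_of_abs_lt_one <| by
    rw [abs_inv, abs_neg, abs_of_pos (by linarith)]; exact inv_lt_one_of_one_lt₀ hq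
  have hIcc : ∀ a j : ℕ, ∏ l ∈ Icc (a + 1) (a + j), (1 - (-q) ^ (-(l : ℤ)))
      = qPochhammer (x ^ (a + 1)) x j := fun a j => by
    simp_rw [zpow_neg_eq_inv_pow (-q) rfl]
    exact prod_Icc_one_sub_pow x a j
  have hIcc_one : ∀ j : ℕ, ∏ l ∈ Icc 1 j, (1 - (-q) ^ (-(l : ℤ)))
      = qPochhammer x x j := by
    simpa using hIcc 0
  obtain ⟨m, hm⟩ : ∃ m, h - t = m + 1 := ⟨h - t - 1, by omega⟩
  have key := sum_partialFractionTerm (x ^ (n - h)) hx m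
    (by rw [← pow_succ]; exact qPochhammer_pow_succ_ne_zero hx _ _)
  rw [show h - t - 1 = m by omega, hm]
  convert key using 1
  · refine sum_congr rfl fun k hk_mem => ?_
    have hk : k ≤ m := Nat.lt_succ_iff.mp (mem_range.mp hk_mem)
    rw [partialFractionTerm, zpow_neg_eq_inv_pow (-q) (Int.natCast_choose_two k).symm,
      zpow_neg_eq_inv_pow (N := n - t - k) (-q) (by omega), hIcc_one, hIcc_one,
      show m + 1 - k - 1 = m - k by omega, ← pow_add,
      show n - h + (m + 1 - k) = n - t - k by omega]
  · have hht : (h : ℤ) - t = ((m + 1 : ℕ) : ℤ) := by omega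
    have hnh : (n : ℤ) - h = ((n - h : ℕ) : ℤ) := by omega
    rw [partialFractionTarget, hht, ← Int.natCast_choose_two, zpow_neg_eq_inv_pow (-q) rfl, hnh,
      zpow_neg_eq_inv_pow (N := (n - h) * m) (-q) (by push_cast; ring), pow_mul, ← pow_succ,
      show n - t = n - h + (m + 1) by omega, hIcc]
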